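/- For i = 1,2, let q_i(x,ξ) = (1/2) c_i(x) ξ² + 2 ∫_{(0,∞)} (1 − cos(ξ y)) ν_i(x,dy) be one-dimensional symmetric symbols (so c_i : ℝ → [0,∞) with sup_x c_i(x) < ∞, and ν_i kernels of Borel measures on (0,∞) with sup_x ∫ min{1,y²} ν_i(x,dy) < ∞). Assume there is a kernel ρ of Borel measures on (0,∞) such that ν_1(x,B) ≤ ν_2(x,B) + ρ(x,B) and ν_2(x,B) ≤ ν_1(x,B) + ρ(x,B) for all x ∈ ℝ and Borel B ⊆ (0,∞), and sup_{x∈ℝ} ∫_{(0,∞)} y² ρ(x,dy) < ∞. If ∫_{{|ξ|<r}} dξ / sup_{x∈ℝ} q_1(x,ξ) = ∞ for every r > 0, then ∫_{{|ξ|<r}} dξ / sup_{x∈ℝ} q_2(x,ξ) = ∞ for every r > 0. -/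

import Mathlib

open MeasureTheory Filter Topology
open scoped ENNReal

/-- A one-dimensional symmetric symbol:
`q(x,ξ) = (1/2)c(x)ξ² + 2∫_{(0,∞)} (1 − cos(ξy)) ν(x,dy)`, valued in `[0,∞]`. -/
noncomputable def oneDimSymbol (c : ℝ → ℝ) (ν : ℝ → MeasureTheory.Measure ℝ)
    (x ξ : ℝ) : ℝ≥0∞ :=
  ENNReal.ofReal ((1 / 2) * c x * ξ ^ 2) +
    2 * ∫⁻ y in Set.Ioi (0 : ℝ), ENNReal.ofReal (1 - Real.cos (ξ * y)) ∂(ν x)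

/-!
Write `Qᵢ ξ = ⨆ x, qᵢ(x, ξ)`. Since `ν₂ ≤ ν₁ + ρ` on `(0, ∞)`, `c₂ ≤ K` and `1 - cos t ≤ t² / 2`,
we get `Q₂ ≤ Q₁ + C ξ²` with `C = K + sup_x ∫ y² ρ(x, dy)`. If every second moment
`c₁(x) + ∫ y² ν₁(x, dy)` is at most `2C`, then `Q₂ ≤ 3C ξ²`, and `1 / ξ²` is not integrable at `0`.
Otherwise some `x₀` has a truncated second moment `c₁(x₀) + ∫_{(0,n]} y² ν₁(x₀, dy) > 2C`, and
`1 - cos t ≥ t² / 4` for `|t| ≤ 1` gives `Q₁ ≥ C ξ²` for `|ξ| < 1 / (n + 1)`, so `Q₂ ≤ 2 Q₁` there.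
-/

open Set

theorem Real.sq_div_four_le_one_sub_cos {t : ℝ} (ht : |t| ≤ 1) : t ^ 2 / 4 ≤ 1 - Real.cos t := by
  have h4 : |t| ^ 4 ≤ |t| ^ 2 := pow_le_pow_of_le_one (abs_nonneg t) ht (by norm_num)
  have hcos := (abs_le.1 (Real.cos_bound ht)).2
  nlinarith [sq_abs t]

theorem ENNReal.inv_mul_inv_le_inv_mul {a : ℝ≥0∞} (ha : a ≠ ∞) (b : ℝ≥0∞) :
    a⁻¹ * b⁻¹ ≤ (a * b)⁻¹ := by
  rcases eq_or_ne a 0 with rfl | ha₀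
  · simp
  · rw [ENNReal.mul_inv (Or.inl ha₀) (Or.inl ha)]

theorem ENNReal.ofReal_half_mul_le (a : ℝ) {b : ℝ} (hb : 0 ≤ b) :
    ENNReal.ofReal (1 / 2 * a * b) ≤ ENNReal.ofReal a * ENNReal.ofReal b := by
  rw [← ENNReal.ofReal_mul' hb, ENNReal.ofReal_le_ofReal_iff']
  rcases le_total 0 a with ha | ha
  · left; nlinarith
  · right; nlinarith

namespace MeasureTheory

theorem Measure.restrict_le_restrict_add_restrict {α : Type*} [MeasurableSpace α]
    {μ ν κ : Measure α} {s : Set α} (hs : MeasurableSet s)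
    (h : ∀ B, MeasurableSet B → B ⊆ s → μ B ≤ ν B + κ B) :
    μ.restrict s ≤ ν.restrict s + κ.restrict s := by
  refine Measure.le_iff.2 fun B hB => ?_
  simpa only [Measure.add_apply, Measure.restrict_apply hB] using
    h _ (hB.inter hs) inter_subset_right

theorem setLIntegral_Ioi_eq_iSup_Ioc (μ : Measure ℝ) (f : ℝ → ℝ≥0∞) (a : ℝ) :
    ∫⁻ y in Ioi a, f y ∂μ = ⨆ n : ℕ, ∫⁻ y in Ioc a n, f y ∂μ := by
  have hmono : Monotone fun n : ℕ => Ioc a n := fun m n hmn =>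
    Ioc_subset_Ioc_right (Nat.cast_le.2 hmn)
  rw [← setLIntegral_iUnion_of_directed f hmono.directed_le,
    iUnion_Ioc_eq_Ioi_self_iff.2 fun x _ => exists_nat_ge x]

theorem two_mul_lintegral_one_sub_cos_le (μ : Measure ℝ) (ξ : ℝ) :
    2 * ∫⁻ y, ENNReal.ofReal (1 - Real.cos (ξ * y)) ∂μ ≤
      ENNReal.ofReal (ξ ^ 2) * ∫⁻ y, ENNReal.ofReal (y ^ 2) ∂μ := by
  rw [← lintegral_const_mul' _ _ ENNReal.ofNat_ne_top,
    ← lintegral_const_mul' _ _ ENNReal.ofReal_ne_top]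
  refine lintegral_mono fun y => ?_
  rw [← ENNReal.ofReal_ofNat 2, ← ENNReal.ofReal_mul (by norm_num),
    ← ENNReal.ofReal_mul (sq_nonneg ξ)]
  refine ENNReal.ofReal_le_ofReal ?_
  nlinarith [Real.one_sub_sq_div_two_le_cos (x := ξ * y)]

theorem lintegral_sq_le_four_mul_lintegral_one_sub_cos {μ : Measure ℝ} {ξ : ℝ}
    (h : ∀ᵐ y ∂μ, |ξ * y| ≤ 1) :
    ENNReal.ofReal (ξ ^ 2) * ∫⁻ y, ENNReal.ofReal (y ^ 2) ∂μ ≤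
      4 * ∫⁻ y, ENNReal.ofReal (1 - Real.cos (ξ * y)) ∂μ := by
  rw [← lintegral_const_mul' _ _ ENNReal.ofNat_ne_top,
    ← lintegral_const_mul' _ _ ENNReal.ofReal_ne_top]
  refine lintegral_mono_ae (h.mono fun y hy => ?_)
  rw [← ENNReal.ofReal_mul (sq_nonneg ξ), ← ENNReal.ofReal_ofNat 4,
    ← ENNReal.ofReal_mul (by norm_num)]
  refine ENNReal.ofReal_le_ofReal ?_
  nlinarith [Real.sq_div_four_le_one_sub_cos hy]

end MeasureTheory

section Symbol

variable {c₁ c₂ : ℝ → ℝ} {ν₁ ν₂ ρ : ℝ → Measure ℝ}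

theorem oneDimSymbol_le_add {x : ℝ}
    (hν : (ν₂ x).restrict (Ioi 0) ≤ (ν₁ x).restrict (Ioi 0) + (ρ x).restrict (Ioi 0)) (ξ : ℝ) :
    oneDimSymbol c₂ ν₂ x ξ ≤ oneDimSymbol c₁ ν₁ x ξ +
      (ENNReal.ofReal (c₂ x) + ∫⁻ y in Ioi 0, ENNReal.ofReal (y ^ 2) ∂ρ x) *
        ENNReal.ofReal (ξ ^ 2) := by
  set J : Measure ℝ → ℝ≥0∞ := fun μ => ∫⁻ y in Ioi 0, ENNReal.ofReal (1 - Real.cos (ξ * y)) ∂μ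
  have hjump : 2 * J (ν₂ x) ≤
      2 * J (ν₁ x) + ENNReal.ofReal (ξ ^ 2) * ∫⁻ y in Ioi 0, ENNReal.ofReal (y ^ 2) ∂ρ x := calc
    2 * J (ν₂ x) ≤ 2 * (J (ν₁ x) + J (ρ x)) := by
      gcongr
      exact (lintegral_mono' hν le_rfl).trans_eq (lintegral_add_measure _ _ _)
    _ ≤ _ := by
      rw [mul_add]
      exact add_le_add le_rfl (two_mul_lintegral_one_sub_cos_le _ ξ)
  calc oneDimSymbol c₂ ν₂ x ξ
      ≤ ENNReal.ofReal (c₂ x) * ENNReal.ofReal (ξ ^ 2) +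
          (2 * J (ν₁ x) + ENNReal.ofReal (ξ ^ 2) * ∫⁻ y in Ioi 0, ENNReal.ofReal (y ^ 2) ∂ρ x) :=
        add_le_add (ENNReal.ofReal_half_mul_le _ (sq_nonneg ξ)) hjump
    _ = 2 * J (ν₁ x) + (ENNReal.ofReal (c₂ x) + ∫⁻ y in Ioi 0, ENNReal.ofReal (y ^ 2) ∂ρ x) *
          ENNReal.ofReal (ξ ^ 2) := by ring
    _ ≤ _ := add_le_add_left le_add_self _

theorem oneDimSymbol_le_mul_sq (c : ℝ → ℝ) (ν : ℝ → Measure ℝ) (x ξ : ℝ) :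
    oneDimSymbol c ν x ξ ≤
      (ENNReal.ofReal (c x) + ∫⁻ y in Ioi 0, ENNReal.ofReal (y ^ 2) ∂ν x) *
        ENNReal.ofReal (ξ ^ 2) := by
  simpa [oneDimSymbol] using
    oneDimSymbol_le_add (c₁ := 0) (ν₁ := 0) (ρ := ν) (c₂ := c) (x := x) (by simp) ξ

theorem mul_sq_le_two_mul_oneDimSymbol (c : ℝ → ℝ) (ν : ℝ → Measure ℝ) {x ξ u : ℝ}
    (h : |ξ| * u ≤ 1) :
    (ENNReal.ofReal (c x) + ∫⁻ y in Ioc 0 u, ENNReal.ofReal (y ^ 2) ∂ν x) *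
        ENNReal.ofReal (ξ ^ 2) ≤ 2 * oneDimSymbol c ν x ξ := by
  have hc : ENNReal.ofReal (c x) * ENNReal.ofReal (ξ ^ 2) =
      2 * ENNReal.ofReal (1 / 2 * c x * ξ ^ 2) := by
    rw [← ENNReal.ofReal_mul' (sq_nonneg ξ), ← ENNReal.ofReal_ofNat 2,
      ← ENNReal.ofReal_mul (by norm_num)]
    congr 1
    ring
  have hsmall : ∀ y ∈ Ioc 0 u, |ξ * y| ≤ 1 := fun y hy => by
    rw [abs_mul, abs_of_pos hy.1]
    exact (mul_le_mul_of_nonneg_left hy.2 (abs_nonneg ξ)).trans h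
  have hjump : ENNReal.ofReal (ξ ^ 2) * ∫⁻ y in Ioc 0 u, ENNReal.ofReal (y ^ 2) ∂ν x ≤
      2 * (2 * ∫⁻ y in Ioi 0, ENNReal.ofReal (1 - Real.cos (ξ * y)) ∂ν x) := calc
    _ ≤ 4 * ∫⁻ y in Ioc 0 u, ENNReal.ofReal (1 - Real.cos (ξ * y)) ∂ν x :=
      lintegral_sq_le_four_mul_lintegral_one_sub_cos
        (ae_restrict_of_forall_mem measurableSet_Ioc hsmall)
    _ ≤ 4 * ∫⁻ y in Ioi 0, ENNReal.ofReal (1 - Real.cos (ξ * y)) ∂ν x := by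
      gcongr
      exact Ioc_subset_Ioi_self
    _ = _ := by ring
  rw [add_mul, hc, mul_comm _ (ENNReal.ofReal (ξ ^ 2)), oneDimSymbol, mul_add]
  exact add_le_add le_rfl hjump

theorem iSup_oneDimSymbol_le_or_le (c : ℝ → ℝ) (ν : ℝ → Measure ℝ) (A : ℝ≥0∞) :
    (∀ ξ, ⨆ x, oneDimSymbol c ν x ξ ≤ 2 * A * ENNReal.ofReal (ξ ^ 2)) ∨
      ∃ s > 0, ∀ ξ ∈ Metric.ball (0 : ℝ) s,
        A * ENNReal.ofReal (ξ ^ 2) ≤ ⨆ x, oneDimSymbol c ν x ξ := by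
  by_cases hbdd : ∀ x, ENNReal.ofReal (c x) + ∫⁻ y in Ioi 0, ENNReal.ofReal (y ^ 2) ∂ν x ≤ 2 * A
  · refine Or.inl fun ξ => iSup_le fun x => (oneDimSymbol_le_mul_sq c ν x ξ).trans ?_
    gcongr
    exact hbdd x
  push Not at hbdd
  obtain ⟨x₀, hx₀⟩ := hbdd
  rw [setLIntegral_Ioi_eq_iSup_Ioc, ENNReal.add_iSup] at hx₀
  obtain ⟨n, hn⟩ := lt_iSup_iff.1 hx₀
  refine Or.inr ⟨1 / (n + 1), by positivity, fun ξ hξ => ?_⟩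
  have hξn : |ξ| * n ≤ 1 := by
    rw [mem_ball_zero_iff, Real.norm_eq_abs, lt_div_iff₀ (by positivity)] at hξ
    nlinarith [abs_nonneg ξ]
  refine (ENNReal.mul_le_mul_iff_right two_ne_zero ENNReal.ofNat_ne_top).1 ?_
  calc 2 * (A * ENNReal.ofReal (ξ ^ 2))
      ≤ (ENNReal.ofReal (c x₀) + ∫⁻ y in Ioc 0 (n : ℝ), ENNReal.ofReal (y ^ 2) ∂ν x₀) *
          ENNReal.ofReal (ξ ^ 2) := by
        rw [← mul_assoc]
        gcongr
    _ ≤ 2 * oneDimSymbol c ν x₀ ξ := mul_sq_le_two_mul_oneDimSymbol c ν hξn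
    _ ≤ 2 * ⨆ x, oneDimSymbol c ν x ξ := by
        gcongr
        exact le_iSup (fun x => oneDimSymbol c ν x ξ) x₀

theorem iSup_oneDimSymbol_le_add {K : ℝ} (hK : ∀ x, c₂ x ≤ K)
    (hν : ∀ x, (ν₂ x).restrict (Ioi 0) ≤ (ν₁ x).restrict (Ioi 0) + (ρ x).restrict (Ioi 0))
    (ξ : ℝ) :
    ⨆ x, oneDimSymbol c₂ ν₂ x ξ ≤ (⨆ x, oneDimSymbol c₁ ν₁ x ξ) +
      (ENNReal.ofReal K + ⨆ x, ∫⁻ y in Ioi 0, ENNReal.ofReal (y ^ 2) ∂ρ x) *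
        ENNReal.ofReal (ξ ^ 2) :=
  iSup_le fun x => (oneDimSymbol_le_add (hν x) ξ).trans <| by
    gcongr
    · exact le_iSup (fun x => oneDimSymbol c₁ ν₁ x ξ) x
    · exact hK x
    · exact le_iSup (fun x => ∫⁻ y in Ioi 0, ENNReal.ofReal (y ^ 2) ∂ρ x) x

end Symbol

def InvDivergesNearZero (f : ℝ → ℝ≥0∞) : Prop :=
  ∀ r > (0 : ℝ), ∫⁻ ξ in Metric.ball (0 : ℝ) r, (f ξ)⁻¹ = ∞

theorem invDivergesNearZero_sq : InvDivergesNearZero fun ξ => ENNReal.ofReal (ξ ^ 2) := by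
  intro r hr
  have hnot : ¬IntegrableOn (fun ξ : ℝ => ξ ^ (-2 : ℝ)) (Ioo 0 r) := by
    rw [intervalIntegral.integrableOn_Ioo_rpow_iff hr]
    norm_num
  have htop : ∫⁻ ξ in Ioo 0 r, ‖ξ ^ (-2 : ℝ)‖ₑ = ∞ := by
    by_contra h
    exact hnot ⟨(measurable_id.pow_const _).aestronglyMeasurable, lt_top_iff_ne_top.2 h⟩
  have hpt : ∀ ξ ∈ Ioo (0 : ℝ) r, ‖ξ ^ (-2 : ℝ)‖ₑ = (ENNReal.ofReal (ξ ^ 2))⁻¹ := fun ξ hξ => by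
    rw [Real.enorm_of_nonneg (Real.rpow_nonneg hξ.1.le _), Real.rpow_neg hξ.1.le,
      ENNReal.ofReal_inv_of_pos (Real.rpow_pos_of_pos hξ.1 _)]
    norm_cast
  have hsub : Ioo 0 r ⊆ Metric.ball 0 r := by
    rw [Real.ball_eq_Ioo]
    exact Ioo_subset_Ioo (by linarith) (by linarith)
  refine eq_top_iff.2 (calc
    ∞ = ∫⁻ ξ in Ioo 0 r, (ENNReal.ofReal (ξ ^ 2))⁻¹ := by
      rw [← setLIntegral_congr_fun measurableSet_Ioo hpt, htop]
    _ ≤ _ := lintegral_mono_set hsub)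

theorem InvDivergesNearZero.of_le_mul {f g : ℝ → ℝ≥0∞} (hf : InvDivergesNearZero f)
    {a : ℝ≥0∞} (ha : a ≠ ∞) {s : ℝ} (hs : 0 < s)
    (hgf : ∀ ξ ∈ Metric.ball (0 : ℝ) s, g ξ ≤ a * f ξ) : InvDivergesNearZero g := by
  intro r hr
  refine eq_top_iff.2 (calc
    ∞ = a⁻¹ * ∫⁻ ξ in Metric.ball 0 (min r s), (f ξ)⁻¹ := by
      rw [hf _ (lt_min hr hs), ENNReal.mul_top (ENNReal.inv_ne_zero.2 ha)]
    _ ≤ ∫⁻ ξ in Metric.ball 0 (min r s), a⁻¹ * (f ξ)⁻¹ := lintegral_const_mul_le _ _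
    _ ≤ ∫⁻ ξ in Metric.ball 0 (min r s), (g ξ)⁻¹ :=
      lintegral_mono_ae <| ae_restrict_of_forall_mem measurableSet_ball fun ξ hξ =>
        (ENNReal.inv_mul_inv_le_inv_mul ha _).trans <| ENNReal.inv_le_inv.2 <|
          hgf ξ (Metric.ball_subset_ball (min_le_right _ _) hξ)
    _ ≤ ∫⁻ ξ in Metric.ball 0 r, (g ξ)⁻¹ :=
      lintegral_mono_set (Metric.ball_subset_ball (min_le_left _ _)))

theorem stmt10_general (c₁ c₂ : ℝ → ℝ) (ν₁ ν₂ ρ : ℝ → MeasureTheory.Measure ℝ)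
    (hc₂b : ∃ K : ℝ, ∀ x, c₂ x ≤ K)
    (hdom₂ : ∀ x, ∀ B : Set ℝ, MeasurableSet B → B ⊆ Set.Ioi (0 : ℝ) →
      ν₂ x B ≤ ν₁ x B + ρ x B)
    (hρ : (⨆ x, ∫⁻ y in Set.Ioi (0 : ℝ), ENNReal.ofReal (y ^ 2) ∂(ρ x)) < ∞)
    (hCF : ∀ r > (0 : ℝ), ∫⁻ ξ in Metric.ball (0 : ℝ) r,
      (⨆ x, oneDimSymbol c₁ ν₁ x ξ)⁻¹ = ∞) :
    ∀ r > (0 : ℝ), ∫⁻ ξ in Metric.ball (0 : ℝ) r,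
      (⨆ x, oneDimSymbol c₂ ν₂ x ξ)⁻¹ = ∞ := by
  obtain ⟨K, hK⟩ := hc₂b
  have hcomp := iSup_oneDimSymbol_le_add (c₁ := c₁) hK fun x =>
    Measure.restrict_le_restrict_add_restrict measurableSet_Ioi (hdom₂ x)
  set C := ENNReal.ofReal K + ⨆ x, ∫⁻ y in Ioi 0, ENNReal.ofReal (y ^ 2) ∂ρ x
  have hC : C ≠ ∞ := ENNReal.add_ne_top.2 ⟨ENNReal.ofReal_ne_top, hρ.ne⟩
  rcases iSup_oneDimSymbol_le_or_le c₁ ν₁ C with hQ₁ | ⟨s, hs, hQ₁⟩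
  · exact invDivergesNearZero_sq.of_le_mul (by finiteness) one_pos fun ξ _ =>
      (hcomp ξ).trans <| (add_le_add (hQ₁ ξ) le_rfl).trans_eq (add_mul _ _ _).symm
  · exact InvDivergesNearZero.of_le_mul hCF ENNReal.ofNat_ne_top hs fun ξ hξ =>
      (hcomp ξ).trans <| (add_le_add le_rfl (hQ₁ ξ hξ)).trans_eq (two_mul _).symm

/-- perturbations of the Lévy kernel with uniformly bounded second moment
do not affect the Chung–Fuchs recurrence condition. -/
theorem stmt10 (c₁ c₂ : ℝ → ℝ) (ν₁ ν₂ ρ : ℝ → MeasureTheory.Measure ℝ)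
    (hc₁ : ∀ x, 0 ≤ c₁ x) (hc₂ : ∀ x, 0 ≤ c₂ x)
    (hc₁b : ∃ K : ℝ, ∀ x, c₁ x ≤ K) (hc₂b : ∃ K : ℝ, ∀ x, c₂ x ≤ K)
    (hν₁ : (⨆ x, ∫⁻ y in Set.Ioi (0 : ℝ), ENNReal.ofReal (min 1 (y ^ 2)) ∂(ν₁ x)) < ∞)
    (hν₂ : (⨆ x, ∫⁻ y in Set.Ioi (0 : ℝ), ENNReal.ofReal (min 1 (y ^ 2)) ∂(ν₂ x)) < ∞)
    (hdom₁ : ∀ x, ∀ B : Set ℝ, MeasurableSet B → B ⊆ Set.Ioi (0 : ℝ) →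
      ν₁ x B ≤ ν₂ x B + ρ x B)
    (hdom₂ : ∀ x, ∀ B : Set ℝ, MeasurableSet B → B ⊆ Set.Ioi (0 : ℝ) →
      ν₂ x B ≤ ν₁ x B + ρ x B)
    (hρ : (⨆ x, ∫⁻ y in Set.Ioi (0 : ℝ), ENNReal.ofReal (y ^ 2) ∂(ρ x)) < ∞)
    (hm₁ : Measurable fun ξ : ℝ => ⨆ x, oneDimSymbol c₁ ν₁ x ξ)
    (hm₂ : Measurable fun ξ : ℝ => ⨆ x, oneDimSymbol c₂ ν₂ x ξ)
    (hCF : ∀ r > (0 : ℝ), ∫⁻ ξ in Metric.ball (0 : ℝ) r,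
      (⨆ x, oneDimSymbol c₁ ν₁ x ξ)⁻¹ = ∞) :
    ∀ r > (0 : ℝ), ∫⁻ ξ in Metric.ball (0 : ℝ) r,
      (⨆ x, oneDimSymbol c₂ ν₂ x ξ)⁻¹ = ∞ :=
  stmt10_general c₁ c₂ ν₁ ν₂ ρ hc₂b hdom₂ hρ hCF
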